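/- arXiv:2309.06312 — 4 statements merged into one kernel-verified Lean document; each statement's English description precedes it below -/
import Mathlib

section
/- Let A be a ring with an involution *, and let x, y ∈ A satisfy x*x = y*y = 1 and xx* + yy* = 1. Define Q ∈ M₃(A) as the matrix with rows (x, y, 0), (0, 0, x*), (0, 0, y*). Then Q is invertible with inverse Q* (the conjugate transpose), and for all b, b' ∈ A, conjugating the matrix diag(x b x* + y b' y*, 0, 0) by Q* yields diag(b, b', 0); that is, Q* · diag(b ⊞ b', 0, 0) · Q = diag(b, b', 0), where b ⊞ b' = x b x* + y b' y*. -/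
open Matrix

/-!
Since `x` and `y` are isometries whose range projections `x x*` and `y y*` sum to `1`, they have
orthogonal ranges: `x* y = 0`. With this, all three identities are entrywise computations in
which every entry collapses to `0`, `1`, `b` or `b'`.
-/

section

variable {A : Type*} [Ring A] [StarRing A]

theorem star_mul_eq_zero_of_add_eq_one {x y : A} (hxx : star x * x = 1) (hyy : star y * y = 1)
    (hsum : x * star x + y * star y = 1) : star x * y = 0 := by
  have h : star x * (x * star x + y * star y) * y = star x * y + star x * y := by
    rw [mul_add, add_mul, ← mul_assoc, hxx, one_mul, mul_assoc, mul_assoc, hyy, mul_one]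
  rwa [hsum, mul_one, left_eq_add] at h

def wagonerMatrix (x y : A) : Matrix (Fin 3) (Fin 3) A :=
  !![x, y, 0; 0, 0, star x; 0, 0, star y]

theorem conjTranspose_wagonerMatrix (x y : A) :
    (wagonerMatrix x y)ᴴ = !![star x, 0, 0; star y, 0, 0; 0, x, y] := by
  rw [eta_fin_three (_ᴴ)]
  simp [wagonerMatrix]

section Isometries

variable {x y : A} (hxx : star x * x = 1) (hyy : star y * y = 1)
  (hsum : x * star x + y * star y = 1)
include hxx hyy hsum

theorem wagonerMatrix_mul_conjTranspose : wagonerMatrix x y * (wagonerMatrix x y)ᴴ = 1 := by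
  have hxy := star_mul_eq_zero_of_add_eq_one hxx hyy hsum
  have hyx := star_mul_eq_zero_of_add_eq_one hyy hxx (by rwa [add_comm])
  rw [conjTranspose_wagonerMatrix, wagonerMatrix, mul_fin_three, one_fin_three]
  simp [hxx, hyy, hsum, hxy, hyx]

theorem conjTranspose_mul_wagonerMatrix : (wagonerMatrix x y)ᴴ * wagonerMatrix x y = 1 := by
  have hxy := star_mul_eq_zero_of_add_eq_one hxx hyy hsum
  have hyx := star_mul_eq_zero_of_add_eq_one hyy hxx (by rwa [add_comm])
  rw [conjTranspose_wagonerMatrix, wagonerMatrix, mul_fin_three, one_fin_three]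
  simp [hxx, hyy, hsum, hxy, hyx]

end Isometries

theorem conjTranspose_wagonerMatrix_mul_diagonal_mul (x y d : A) :
    (wagonerMatrix x y)ᴴ * diagonal ![d, 0, 0] * wagonerMatrix x y =
      !![star x * d * x, star x * d * y, 0; star y * d * x, star y * d * y, 0; 0, 0, 0] := by
  rw [conjTranspose_wagonerMatrix, wagonerMatrix, diagonal_vec3, mul_fin_three, mul_fin_three]
  simp

end

/-- Wagoner's matrix `Q` built from a sum *-ring structure is invertible with inverse
its conjugate transpose, and conjugation by `Qᴴ` turns `diag(b ⊞ b', 0, 0)` into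
`diag(b, b', 0)`. -/
theorem stmt_2 {A : Type*} [Ring A] [StarRing A]
    (x y : A) (hxx : star x * x = 1) (hyy : star y * y = 1)
    (hsum : x * star x + y * star y = 1)
    (Q : Matrix (Fin 3) (Fin 3) A)
    (hQ : Q = !![x, y, 0; 0, 0, star x; 0, 0, star y]) :
    Q * Qᴴ = 1 ∧ Qᴴ * Q = 1 ∧
      ∀ b b' : A,
        Qᴴ * Matrix.diagonal ![x * b * star x + y * b' * star y, 0, 0] * Q =
          Matrix.diagonal ![b, b', 0] := by
  obtain rfl : Q = wagonerMatrix x y := hQ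
  refine ⟨wagonerMatrix_mul_conjTranspose hxx hyy hsum,
    conjTranspose_mul_wagonerMatrix hxx hyy hsum, fun b b' => ?_⟩
  have hxy := star_mul_eq_zero_of_add_eq_one hxx hyy hsum
  have hyx := star_mul_eq_zero_of_add_eq_one hyy hxx (by rwa [add_comm])
  have expand (u v : A) : star u * (x * b * star x + y * b' * star y) * v =
      star u * x * b * (star x * v) + star u * y * b' * (star y * v) := by
    noncomm_ring
  rw [conjTranspose_wagonerMatrix_mul_diagonal_mul, diagonal_vec3, expand, expand, expand, expand]
  simp [hxx, hyy, hxy, hyx]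
end

section
/- Let R be a G-graded unital ring that is strongly graded, i.e. R_g R_h = R_{gh} for all g, h ∈ G. Then for any G-graded unital ring B, the tensor product grading on B ⊗ R (over the base ring) makes B ⊗ R strongly graded. -/
/-
Homogeneous pure tensors span each component, so `⊆` follows from
`(b ⊗ r)(b' ⊗ r') = bb' ⊗ rr'`. For `⊇`, take `b ∈ B_a` and `r ∈ R_c` with `a + c = g + h`.
Strong grading puts `r` in `R_{g-a} R_h`, and for `r = r₁ r₂` there
`b ⊗ r₁r₂ = (b ⊗ r₁)(1 ⊗ r₂) ∈ (B ⊗ R)_g (B ⊗ R)_h`.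
-/

open TensorProduct

/-- The tensor product grading: `(B ⊗ R)_d = ⊕_{g+h=d} B_g ⊗ R_h`. -/
noncomputable def tensorGrading {ℓ B R G : Type*} [CommRing ℓ] [Ring B] [Ring R]
    [Algebra ℓ B] [Algebra ℓ R] [AddCommGroup G]
    (ℬ : G → Submodule ℓ B) (ℛ : G → Submodule ℓ R) (d : G) :
    Submodule ℓ (B ⊗[ℓ] R) :=
  ⨆ q : {q : G × G // q.1 + q.2 = d},
    LinearMap.range (TensorProduct.map (ℬ q.1.1).subtype (ℛ q.1.2).subtype)

section TensorGrading

variable {ℓ B R G : Type*} [CommRing ℓ] [Ring B] [Ring R] [Algebra ℓ B] [Algebra ℓ R]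
  [AddCommGroup G] (ℬ : G → Submodule ℓ B) (ℛ : G → Submodule ℓ R)

lemma tmul_mem_tensorGrading {g h d : G} (hd : g + h = d) {b : B} {r : R}
    (hb : b ∈ ℬ g) (hr : r ∈ ℛ h) : b ⊗ₜ[ℓ] r ∈ tensorGrading ℬ ℛ d :=
  le_iSup (fun q : {q : G × G // q.1 + q.2 = d} =>
      LinearMap.range (TensorProduct.map (ℬ q.1.1).subtype (ℛ q.1.2).subtype))
    ⟨(g, h), hd⟩ ⟨(⟨b, hb⟩ : ℬ g) ⊗ₜ[ℓ] (⟨r, hr⟩ : ℛ h), rfl⟩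

lemma tensorGrading_eq_span (d : G) :
    tensorGrading ℬ ℛ d = Submodule.span ℓ
      {x : B ⊗[ℓ] R | ∃ g h, g + h = d ∧ ∃ b ∈ ℬ g, ∃ r ∈ ℛ h, x = b ⊗ₜ[ℓ] r} := by
  apply le_antisymm
  · refine iSup_le fun ⟨⟨g, h⟩, hd⟩ => ?_
    rw [TensorProduct.range_map_eq_span_tmul]
    refine Submodule.span_mono ?_
    rintro _ ⟨⟨b, hb⟩, ⟨r, hr⟩, rfl⟩
    exact ⟨g, h, hd, b, hb, r, hr, rfl⟩
  · rw [Submodule.span_le]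
    rintro _ ⟨g, h, hd, b, hb, r, hr, rfl⟩
    exact tmul_mem_tensorGrading ℬ ℛ hd hb hr

lemma tensorGrading_mul_le [SetLike.GradedMul ℬ] [SetLike.GradedMul ℛ] (g h : G) :
    tensorGrading ℬ ℛ g * tensorGrading ℬ ℛ h ≤ tensorGrading ℬ ℛ (g + h) := by
  rw [tensorGrading_eq_span ℬ ℛ g, tensorGrading_eq_span ℬ ℛ h, Submodule.span_mul_span,
    Submodule.span_le]
  rintro _ ⟨_, ⟨a, c, rfl, b, hb, r, hr, rfl⟩, _, ⟨a', c', rfl, b', hb', r', hr', rfl⟩, rfl⟩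
  change (b ⊗ₜ[ℓ] r) * (b' ⊗ₜ[ℓ] r') ∈ _
  rw [Algebra.TensorProduct.tmul_mul_tmul]
  exact tmul_mem_tensorGrading ℬ ℛ (add_add_add_comm a a' c c')
    (SetLike.mul_mem_graded hb hb') (SetLike.mul_mem_graded hr hr')

lemma tmul_mem_tensorGrading_mul [SetLike.GradedOne ℬ] {a g h : G} {b : B} {r : R}
    (hb : b ∈ ℬ a) (hr : r ∈ ℛ (g - a) * ℛ h) :
    b ⊗ₜ[ℓ] r ∈ tensorGrading ℬ ℛ g * tensorGrading ℬ ℛ h := by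
  induction hr using Submodule.mul_induction_on' with
  | mem_mul_mem r₁ hr₁ r₂ hr₂ =>
    have hfactor : b ⊗ₜ[ℓ] (r₁ * r₂) = (b ⊗ₜ[ℓ] r₁) * ((1 : B) ⊗ₜ[ℓ] r₂) := by
      rw [Algebra.TensorProduct.tmul_mul_tmul, mul_one]
    rw [hfactor]
    exact Submodule.mul_mem_mul (tmul_mem_tensorGrading ℬ ℛ (add_sub_cancel a g) hb hr₁)
      (tmul_mem_tensorGrading ℬ ℛ (zero_add h) (SetLike.one_mem_graded ℬ) hr₂)
  | add _ _ _ _ hx hy =>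
    rw [TensorProduct.tmul_add]
    exact add_mem hx hy

lemma le_tensorGrading_mul [SetLike.GradedOne ℬ] (hℛ : ∀ g h : G, ℛ (g + h) ≤ ℛ g * ℛ h)
    (g h : G) : tensorGrading ℬ ℛ (g + h) ≤ tensorGrading ℬ ℛ g * tensorGrading ℬ ℛ h := by
  rw [tensorGrading_eq_span ℬ ℛ (g + h), Submodule.span_le]
  rintro _ ⟨a, c, hac, b, hb, r, hr, rfl⟩
  have hc : g - a + h = c := by rw [sub_add_eq_add_sub, ← hac, add_sub_cancel_left]
  exact tmul_mem_tensorGrading_mul ℬ ℛ hb (hℛ (g - a) h (hc ▸ hr))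

end TensorGrading

/-- If `R` is strongly graded, then for any graded algebra `B` the tensor product
grading makes `B ⊗ R` strongly graded. -/
theorem stmt_3 {ℓ B R G : Type*} [CommRing ℓ] [Ring B] [Ring R]
    [Algebra ℓ B] [Algebra ℓ R] [AddCommGroup G] [DecidableEq G]
    (ℬ : G → Submodule ℓ B) (ℛ : G → Submodule ℓ R)
    [GradedAlgebra ℬ] [GradedAlgebra ℛ]
    (hR : ∀ g h : G, ℛ g * ℛ h = ℛ (g + h)) :
    ∀ g h : G,
      tensorGrading ℬ ℛ g * tensorGrading ℬ ℛ h = tensorGrading ℬ ℛ (g + h) :=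
  fun g h => le_antisymm (tensorGrading_mul_le ℬ ℛ g h)
    (le_tensorGrading_mul ℬ ℛ (fun g h => (hR g h).ge) g h)
end

section
/- Let ℓ be a field and E a finite primitive graph (adjacency matrix primitive, no sinks or sources). For every edge e ∈ E¹, the idempotent ee* is full in the degree-zero subalgebra L(E)₀ of the Leavitt path algebra, i.e. the two-sided ideal of L(E)₀ generated by ee* is all of L(E)₀. -/
/-- Generators of the Leavitt path algebra: vertices, edges and ghost edges. -/
inductive LPAGen (V E : Type*) where
  | vertex : V → LPAGen V E
  | edge : E → LPAGen V E
  | ghost : E → LPAGen V E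

/-- The defining relations of the (unital) Leavitt path algebra of a finite graph,
imposed on the free algebra over the generators. -/
inductive LPARel (ℓ : Type*) [CommRing ℓ] {V E : Type*} [Fintype V] [Fintype E]
    [DecidableEq V] [DecidableEq E] (s r : E → V) :
    FreeAlgebra ℓ (LPAGen V E) → FreeAlgebra ℓ (LPAGen V E) → Prop
  | vert (v w : V) :
      LPARel ℓ s r (FreeAlgebra.ι ℓ (LPAGen.vertex v) * FreeAlgebra.ι ℓ (LPAGen.vertex w))
        (if v = w then FreeAlgebra.ι ℓ (LPAGen.vertex v) else 0)
  | edge_left (e : E) :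
      LPARel ℓ s r (FreeAlgebra.ι ℓ (LPAGen.vertex (s e)) * FreeAlgebra.ι ℓ (LPAGen.edge e))
        (FreeAlgebra.ι ℓ (LPAGen.edge e))
  | edge_right (e : E) :
      LPARel ℓ s r (FreeAlgebra.ι ℓ (LPAGen.edge e) * FreeAlgebra.ι ℓ (LPAGen.vertex (r e)))
        (FreeAlgebra.ι ℓ (LPAGen.edge e))
  | ghost_left (e : E) :
      LPARel ℓ s r (FreeAlgebra.ι ℓ (LPAGen.vertex (r e)) * FreeAlgebra.ι ℓ (LPAGen.ghost e))
        (FreeAlgebra.ι ℓ (LPAGen.ghost e))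
  | ghost_right (e : E) :
      LPARel ℓ s r (FreeAlgebra.ι ℓ (LPAGen.ghost e) * FreeAlgebra.ι ℓ (LPAGen.vertex (s e)))
        (FreeAlgebra.ι ℓ (LPAGen.ghost e))
  | ck1 (e f : E) :
      LPARel ℓ s r (FreeAlgebra.ι ℓ (LPAGen.ghost f) * FreeAlgebra.ι ℓ (LPAGen.edge e))
        (if f = e then FreeAlgebra.ι ℓ (LPAGen.vertex (r e)) else 0)
  | ck2 (v : V) (hv : ∃ e, s e = v) :
      LPARel ℓ s r (FreeAlgebra.ι ℓ (LPAGen.vertex v))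
        (∑ e ∈ Finset.univ.filter (fun e => s e = v),
          FreeAlgebra.ι ℓ (LPAGen.edge e) * FreeAlgebra.ι ℓ (LPAGen.ghost e))
  | unit_total :
      LPARel ℓ s r 1 (∑ v : V, FreeAlgebra.ι ℓ (LPAGen.vertex v))

/-- The Leavitt path algebra of the finite graph `(V, E, s, r)` over `ℓ`. -/
abbrev LPA (ℓ : Type*) [CommRing ℓ] {V E : Type*} [Fintype V] [Fintype E]
    [DecidableEq V] [DecidableEq E] (s r : E → V) :=
  RingQuot (LPARel ℓ s r)

/-- The image in the Leavitt path algebra of a generator. -/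
noncomputable def lpaGen (ℓ : Type*) [CommRing ℓ] {V E : Type*} [Fintype V] [Fintype E]
    [DecidableEq V] [DecidableEq E] (s r : E → V) (g : LPAGen V E) : LPA ℓ s r :=
  RingQuot.mkAlgHom ℓ (LPARel ℓ s r) (FreeAlgebra.ι ℓ g)

/-- The weight of a generator for the standard `ℤ`-grading. -/
def lpaWt {V E : Type*} : LPAGen V E → ℤ
  | .vertex _ => 0
  | .edge _ => 1
  | .ghost _ => -1

/-- The degree-`n` homogeneous component of the Leavitt path algebra for the
standard `ℤ`-grading: the span of products of generators of total weight `n`. -/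
noncomputable def lpaGrade (ℓ : Type*) [CommRing ℓ] {V E : Type*} [Fintype V] [Fintype E]
    [DecidableEq V] [DecidableEq E] (s r : E → V) (n : ℤ) : Submodule ℓ (LPA ℓ s r) :=
  Submodule.span ℓ
    {a | ∃ l : List (LPAGen V E), (l.map lpaWt).sum = n ∧
      a = (l.map (lpaGen ℓ s r)).prod}

/-- The adjacency matrix of a finite graph. -/
noncomputable def lpaAdj {V E : Type*} [Fintype V] [Fintype E] [DecidableEq V]
    (s r : E → V) : Matrix V V ℕ :=
  Matrix.of fun v w => Fintype.card {e : E // s e = v ∧ r e = w}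


namespace LPAAux

section

variable (ℓ : Type*) [CommRing ℓ] {V E : Type*} [Fintype V] [Fintype E]
  [DecidableEq V] [DecidableEq E] (s r : E → V)

/-- vertex element -/
noncomputable def ve (v : V) : LPA ℓ s r := lpaGen ℓ s r (LPAGen.vertex v)
/-- edge element -/
noncomputable def ed (e : E) : LPA ℓ s r := lpaGen ℓ s r (LPAGen.edge e)
/-- ghost element -/
noncomputable def gh (e : E) : LPA ℓ s r := lpaGen ℓ s r (LPAGen.ghost e)

lemma rel_eq {x y} (h : LPARel ℓ s r x y) :
    RingQuot.mkAlgHom ℓ (LPARel ℓ s r) x = RingQuot.mkAlgHom ℓ (LPARel ℓ s r) y :=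
  RingQuot.mkAlgHom_rel ℓ h

lemma edge_left (e : E) : ve ℓ s r (s e) * ed ℓ s r e = ed ℓ s r e := by
  have h := rel_eq ℓ s r (LPARel.edge_left e)
  simp only [map_mul] at h
  simpa [ve, ed, lpaGen] using h

lemma edge_right (e : E) : ed ℓ s r e * ve ℓ s r (r e) = ed ℓ s r e := by
  have h := rel_eq ℓ s r (LPARel.edge_right e)
  simp only [map_mul] at h
  simpa [ve, ed, lpaGen] using h

lemma ghost_left (e : E) : ve ℓ s r (r e) * gh ℓ s r e = gh ℓ s r e := by
  have h := rel_eq ℓ s r (LPARel.ghost_left e)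
  simp only [map_mul] at h
  simpa [ve, gh, lpaGen] using h

lemma ghost_right (e : E) : gh ℓ s r e * ve ℓ s r (s e) = gh ℓ s r e := by
  have h := rel_eq ℓ s r (LPARel.ghost_right e)
  simp only [map_mul] at h
  simpa [ve, gh, lpaGen] using h

lemma ck1 (e f : E) :
    gh ℓ s r f * ed ℓ s r e = if f = e then ve ℓ s r (r e) else 0 := by
  have h := rel_eq ℓ s r (LPARel.ck1 e f)
  simp only [map_mul, apply_ite (RingQuot.mkAlgHom ℓ (LPARel ℓ s r)), map_zero] at h
  simpa [ve, ed, gh, lpaGen] using h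

lemma ck1_self (e : E) : gh ℓ s r e * ed ℓ s r e = ve ℓ s r (r e) := by
  simpa using ck1 ℓ s r e e

lemma ck2 (v : V) (hv : ∃ e, s e = v) :
    ve ℓ s r v =
      ∑ e ∈ Finset.univ.filter (fun e => s e = v), ed ℓ s r e * gh ℓ s r e := by
  have h := rel_eq ℓ s r (LPARel.ck2 v hv)
  simp only [map_sum, map_mul] at h
  simpa [ve, ed, gh, lpaGen] using h

lemma unit_total : (1 : LPA ℓ s r) = ∑ v : V, ve ℓ s r v := by
  have h := rel_eq ℓ s r (LPARel.unit_total)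
  simp only [map_sum, map_one] at h
  simpa [ve, lpaGen] using h

/-- Chain (path) predicate: `chain s r v l w` means `l` is a path from `v` to `w`. -/
def chain : V → List E → V → Prop
  | v, [], w => v = w
  | v, e :: l, w => s e = v ∧ chain (r e) l w

/-- Product of edges of a path. -/
noncomputable def prodE (l : List E) : LPA ℓ s r := (l.map (fun e => ed ℓ s r e)).prod
/-- Product of ghost edges of a path, reversed (the star of the path). -/
noncomputable def prodG (l : List E) : LPA ℓ s r :=
  (l.reverse.map (fun e => gh ℓ s r e)).prod

@[simp] lemma prodE_nil : prodE ℓ s r ([] : List E) = 1 := rfl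
@[simp] lemma prodE_cons (e : E) (l : List E) :
    prodE ℓ s r (e :: l) = ed ℓ s r e * prodE ℓ s r l := by
  simp [prodE]

@[simp] lemma prodG_nil : prodG ℓ s r ([] : List E) = 1 := rfl
@[simp] lemma prodG_cons (e : E) (l : List E) :
    prodG ℓ s r (e :: l) = prodG ℓ s r l * gh ℓ s r e := by
  simp [prodG]

lemma ve_mul_prodE {v w : V} {l : List E} (hl : l ≠ []) (hc : chain s r v l w) :
    ve ℓ s r v * prodE ℓ s r l = prodE ℓ s r l := by
  cases l with
  | nil => exact absurd rfl hl
  | cons e t =>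
      obtain ⟨he, _⟩ := hc
      rw [prodE_cons, ← mul_assoc, ← he, edge_left]

lemma prodG_mul_prodE {v w : V} {l : List E} (hl : l ≠ []) (hc : chain s r v l w) :
    prodG ℓ s r l * prodE ℓ s r l = ve ℓ s r w := by
  induction l generalizing v with
  | nil => exact absurd rfl hl
  | cons e t ih =>
      obtain ⟨he, hc'⟩ := hc
      rw [prodG_cons, prodE_cons]
      cases t with
      | nil =>
          cases hc'
          simp [mul_assoc, ck1_self]
      | cons f t' =>
          have key : gh ℓ s r e * (ed ℓ s r e * prodE ℓ s r (f :: t')) =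
              prodE ℓ s r (f :: t') := by
            rw [← mul_assoc, ck1_self, ve_mul_prodE ℓ s r (by simp) hc']
          rw [mul_assoc, key]
          exact ih (by simp) hc'

lemma ve_mul_prodG {v w : V} {l : List E} (hl : l ≠ []) (hc : chain s r v l w) :
    ve ℓ s r w * prodG ℓ s r l = prodG ℓ s r l := by
  induction l generalizing v with
  | nil => exact absurd rfl hl
  | cons e t ih =>
      obtain ⟨he, hc'⟩ := hc
      cases t with
      | nil => cases hc'; simp [ghost_left]
      | cons f t' =>
          rw [prodG_cons, ← mul_assoc, ih (by simp) hc', ← prodG_cons]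

lemma chain_append {v u w : V} {l : List E} {e : E}
    (hc : chain s r v l u) (he : s e = u) (hr : r e = w) :
    chain s r v (l ++ [e]) w := by
  induction l generalizing v with
  | nil => cases hc; exact ⟨he, hr⟩
  | cons f t ih => exact ⟨hc.1, ih hc.2⟩

lemma exists_chain_of_adj_pow {n : ℕ} :
    ∀ {v w : V}, 0 < (lpaAdj s r ^ n) v w →
      ∃ l : List E, l.length = n ∧ chain s r v l w := by
  induction n with
  | zero =>
      intro v w h
      rw [pow_zero] at h
      by_cases hvw : v = w
      · exact ⟨[], rfl, hvw⟩
      · simp [Matrix.one_apply, hvw] at h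
  | succ n ih =>
      intro v w h
      rw [pow_succ, Matrix.mul_apply] at h
      have hex : ∃ u, 0 < (lpaAdj s r ^ n) v u * lpaAdj s r u w := by
        by_contra hcon
        push_neg at hcon
        simp only [Nat.le_zero] at hcon
        simp [Finset.sum_eq_zero (fun u _ => hcon u)] at h
      obtain ⟨u, hu⟩ := hex
      have h1 : 0 < (lpaAdj s r ^ n) v u := Nat.pos_of_mul_pos_left (by
        rwa [mul_comm] at hu)
      have h2 : 0 < lpaAdj s r u w := Nat.pos_of_mul_pos_left hu
      obtain ⟨l, hlen, hc⟩ := ih h1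
      have hne : Nonempty {e : E // s e = u ∧ r e = w} := by
        rw [← Fintype.card_pos_iff]
        exact h2
      obtain ⟨e, he, hre⟩ := hne
      exact ⟨l ++ [e], by simp [hlen], chain_append s r hc he hre⟩

/-- Membership of a word of total weight zero in the degree-zero component. -/
lemma word_mem (L : List (LPAGen V E)) (h : (L.map lpaWt).sum = 0) :
    (L.map (lpaGen ℓ s r)).prod ∈ lpaGrade ℓ s r 0 :=
  Submodule.subset_span ⟨L, h, rfl⟩

lemma grade0_mul {x y : LPA ℓ s r} (hx : x ∈ lpaGrade ℓ s r 0)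
    (hy : y ∈ lpaGrade ℓ s r 0) : x * y ∈ lpaGrade ℓ s r 0 := by
  induction hx using Submodule.span_induction with
  | mem a ha =>
      induction hy using Submodule.span_induction with
      | mem b hb =>
          obtain ⟨la, hwa, rfl⟩ := ha
          obtain ⟨lb, hwb, rfl⟩ := hb
          exact Submodule.subset_span ⟨la ++ lb, by simp [hwa, hwb], by simp⟩
      | zero => rw [mul_zero]; exact Submodule.zero_mem _
      | add b c _ _ hb hc => rw [mul_add]; exact Submodule.add_mem _ hb hc
      | smul c b _ hb => rw [mul_smul_comm]; exact Submodule.smul_mem _ _ hb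
  | zero => rw [zero_mul]; exact Submodule.zero_mem _
  | add a b _ _ ha hb => rw [add_mul]; exact Submodule.add_mem _ ha hb
  | smul c a _ ha => rw [smul_mul_assoc]; exact Submodule.smul_mem _ _ ha

lemma prodE_eq (l : List E) :
    prodE ℓ s r l = ((l.map LPAGen.edge).map (lpaGen ℓ s r)).prod := by
  simp [prodE, List.map_map]; rfl

lemma prodG_eq (l : List E) :
    prodG ℓ s r l = ((l.reverse.map LPAGen.ghost).map (lpaGen ℓ s r)).prod := by
  simp [prodG, List.map_map]; rfl

lemma wt_edges (l : List E) :
    ((l.map (LPAGen.edge : E → LPAGen V E)).map lpaWt).sum = l.length := by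
  induction l with
  | nil => simp
  | cons e t ih =>
      simp only [List.map_cons, List.sum_cons, ih, List.length_cons, lpaWt]
      push_cast; ring

lemma wt_ghosts (l : List E) :
    ((l.map (LPAGen.ghost : E → LPAGen V E)).map lpaWt).sum = -l.length := by
  induction l with
  | nil => simp
  | cons e t ih =>
      simp only [List.map_cons, List.sum_cons, ih, List.length_cons, lpaWt]
      push_cast; ring

lemma memA (l μ : List E) (e₀ : E) (h : (l.length : ℤ) = (μ.length : ℤ) + 1) :
    prodE ℓ s r l * prodG ℓ s r μ * gh ℓ s r e₀ ∈ lpaGrade ℓ s r 0 := by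
  have hw : (((l.map LPAGen.edge ++ μ.reverse.map LPAGen.ghost ++
      ([LPAGen.ghost e₀] : List (LPAGen V E))).map lpaWt).sum : ℤ) = 0 := by
    simp only [List.map_append, List.sum_append, wt_edges, wt_ghosts,
      List.map_cons, List.map_nil, List.sum_cons, List.sum_nil, List.length_reverse, lpaWt]
    omega
  have := word_mem ℓ s r _ hw
  have h1 : ((([LPAGen.ghost e₀] : List (LPAGen V E))).map (lpaGen ℓ s r)).prod =
      gh ℓ s r e₀ := by simp [gh]
  have heq : ((l.map LPAGen.edge ++ μ.reverse.map LPAGen.ghost ++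
      ([LPAGen.ghost e₀] : List (LPAGen V E))).map (lpaGen ℓ s r)).prod =
      prodE ℓ s r l * prodG ℓ s r μ * gh ℓ s r e₀ := by
    rw [List.map_append, List.map_append, List.prod_append, List.prod_append,
      ← prodE_eq, ← prodG_eq, h1]
  rwa [heq] at this

lemma memB (l μ : List E) (e₀ : E) (h : (l.length : ℤ) = (μ.length : ℤ) + 1) :
    ed ℓ s r e₀ * prodE ℓ s r μ * prodG ℓ s r l ∈ lpaGrade ℓ s r 0 := by
  have hw : (((([LPAGen.edge e₀] : List (LPAGen V E)) ++ μ.map LPAGen.edge ++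
      l.reverse.map LPAGen.ghost).map lpaWt).sum : ℤ) = 0 := by
    simp only [List.map_append, List.sum_append, wt_edges, wt_ghosts,
      List.map_cons, List.map_nil, List.sum_cons, List.sum_nil, List.length_reverse, lpaWt]
    omega
  have := word_mem ℓ s r _ hw
  have h1 : ((([LPAGen.edge e₀] : List (LPAGen V E))).map (lpaGen ℓ s r)).prod =
      ed ℓ s r e₀ := by simp [ed]
  have heq : ((([LPAGen.edge e₀] : List (LPAGen V E)) ++ μ.map LPAGen.edge ++
      l.reverse.map LPAGen.ghost).map (lpaGen ℓ s r)).prod =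
      ed ℓ s r e₀ * prodE ℓ s r μ * prodG ℓ s r l := by
    rw [List.map_append, List.map_append, List.prod_append, List.prod_append,
      ← prodE_eq, ← prodG_eq, h1]
  rwa [heq] at this

/-- Expansion of a vertex as a sum of `α α*` over paths of length `n + 1`. -/
lemma expand (hns : ∀ v, ∃ e, s e = v) (n : ℕ) : ∀ v : V,
    ve ℓ s r v ∈ Submodule.span ℓ
      {x : LPA ℓ s r | ∃ l w, l.length = n + 1 ∧ chain s r v l w ∧
        x = prodE ℓ s r l * prodG ℓ s r l} := by
  induction n with
  | zero =>
      intro v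
      rw [ck2 ℓ s r v (hns v)]
      refine Submodule.sum_mem _ (fun e he => ?_)
      refine Submodule.subset_span ⟨[e], r e, rfl, ⟨(Finset.mem_filter.mp he).2, rfl⟩, ?_⟩
      simp
  | succ n ih =>
      intro v
      rw [ck2 ℓ s r v (hns v)]
      refine Submodule.sum_mem _ (fun e he => ?_)
      have hse : s e = v := (Finset.mem_filter.mp he).2
      have step : ed ℓ s r e * gh ℓ s r e =
          ed ℓ s r e * (ve ℓ s r (r e) * gh ℓ s r e) := by
        rw [ghost_left]
      rw [step]
      have hmem := ih (r e)
      clear step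
      generalize ve ℓ s r (r e) = y at hmem ⊢
      induction hmem using Submodule.span_induction with
      | mem x hx =>
          obtain ⟨l, w, hlen, hc, rfl⟩ := hx
          refine Submodule.subset_span ⟨e :: l, w, by simp [hlen], ⟨hse, hc⟩, ?_⟩
          rw [prodE_cons, prodG_cons]
          rw [mul_assoc, mul_assoc]
      | zero => simp
      | add x y _ _ hx hy =>
          rw [add_mul, mul_add]
          exact Submodule.add_mem _ hx hy
      | smul c x _ hx =>
          rw [smul_mul_assoc, mul_smul_comm]
          exact Submodule.smul_mem _ _ hx

end

end LPAAux

/-- Over a field, for a primitive graph, the idempotent `e e*` is full in the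
degree-zero subalgebra `L(E)₀`: every `x ∈ L(E)₀` is a finite sum `Σ aᵢ (e e*) bᵢ`
with `aᵢ, bᵢ ∈ L(E)₀`. -/
theorem stmt_17 (ℓ : Type*) [Field ℓ] {V E : Type*} [Fintype V] [Fintype E]
    [DecidableEq V] [DecidableEq E] (s r : E → V)
    (hns : ∀ v, ∃ e, s e = v) (hnsource : ∀ v, ∃ e, r e = v)
    (N : ℕ) (hN : 1 ≤ N) (hprim : ∀ v w : V, 0 < (lpaAdj s r ^ N) v w) :
    ∀ e₀ : E, ∀ x ∈ lpaGrade ℓ s r 0,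
      ∃ (m : ℕ) (a b : Fin m → LPA ℓ s r),
        (∀ i, a i ∈ lpaGrade ℓ s r 0) ∧ (∀ i, b i ∈ lpaGrade ℓ s r 0) ∧
        x = ∑ i, a i *
            (lpaGen ℓ s r (LPAGen.edge e₀) * lpaGen ℓ s r (LPAGen.ghost e₀)) * b i := by
  intro e₀ x hx
  classical
  have hed : lpaGen ℓ s r (LPAGen.edge e₀) = LPAAux.ed ℓ s r e₀ := rfl
  have hgh : lpaGen ℓ s r (LPAGen.ghost e₀) = LPAAux.gh ℓ s r e₀ := rfl
  rw [hed, hgh]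
  set P : LPA ℓ s r := LPAAux.ed ℓ s r e₀ * LPAAux.gh ℓ s r e₀ with hP
  set S : Set (LPA ℓ s r) :=
    {y | ∃ a ∈ lpaGrade ℓ s r 0, ∃ b ∈ lpaGrade ℓ s r 0, y = a * P * b} with hS
  -- choose connecting paths from `r e₀` to every vertex
  have hμex : ∀ w : V, ∃ μ : List E, μ.length = N ∧ LPAAux.chain s r (r e₀) μ w :=
    fun w => LPAAux.exists_chain_of_adj_pow s r (hprim (r e₀) w)
  choose μ hμlen hμc using hμex
  have hμne : ∀ w, μ w ≠ [] := by
    intro w h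
    have := hμlen w
    rw [h] at this
    simp at this
    omega
  -- the key vertex identity
  have hveq : ∀ w : V, LPAAux.ve ℓ s r w =
      LPAAux.prodG ℓ s r (μ w) * LPAAux.gh ℓ s r e₀ * P *
        (LPAAux.ed ℓ s r e₀ * LPAAux.prodE ℓ s r (μ w)) := by
    intro w
    have h2 : LPAAux.gh ℓ s r e₀ * (LPAAux.ed ℓ s r e₀ * LPAAux.prodE ℓ s r (μ w)) =
        LPAAux.prodE ℓ s r (μ w) := by
      rw [← mul_assoc, LPAAux.ck1_self, LPAAux.ve_mul_prodE ℓ s r (hμne w) (hμc w)]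
    have hassoc : LPAAux.prodG ℓ s r (μ w) * LPAAux.gh ℓ s r e₀ * P *
        (LPAAux.ed ℓ s r e₀ * LPAAux.prodE ℓ s r (μ w)) =
        LPAAux.prodG ℓ s r (μ w) * (LPAAux.gh ℓ s r e₀ * (LPAAux.ed ℓ s r e₀ *
          (LPAAux.gh ℓ s r e₀ * (LPAAux.ed ℓ s r e₀ * LPAAux.prodE ℓ s r (μ w))))) := by
      rw [hP]; simp only [mul_assoc]
    rw [hassoc, h2, h2, LPAAux.prodG_mul_prodE ℓ s r (hμne w) (hμc w)]
  -- every vertex lies in the ideal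
  have hvJ : ∀ v : V, LPAAux.ve ℓ s r v ∈ Submodule.span ℓ S := by
    intro v
    have hexp := LPAAux.expand ℓ s r hns N v
    refine Submodule.span_le.2 (fun y hy => ?_) hexp
    obtain ⟨l, w, hlen, hc, rfl⟩ := hy
    have hlne : l ≠ [] := by intro h; rw [h] at hlen; simp at hlen
    have hfact : LPAAux.prodE ℓ s r l * LPAAux.prodG ℓ s r l =
        (LPAAux.prodE ℓ s r l * LPAAux.prodG ℓ s r (μ w) * LPAAux.gh ℓ s r e₀) * P *
          (LPAAux.ed ℓ s r e₀ * LPAAux.prodE ℓ s r (μ w) * LPAAux.prodG ℓ s r l) := by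
      conv_lhs => rw [← LPAAux.ve_mul_prodG ℓ s r hlne hc, hveq w]
      simp only [mul_assoc]
    refine Submodule.subset_span ⟨_, ?_, _, ?_, hfact⟩
    · exact LPAAux.memA ℓ s r l (μ w) e₀ (by rw [hlen, hμlen w]; push_cast; ring)
    · exact LPAAux.memB ℓ s r l (μ w) e₀ (by rw [hlen, hμlen w]; push_cast; ring)
  -- 1 lies in the ideal
  have h1J : (1 : LPA ℓ s r) ∈ Submodule.span ℓ S := by
    rw [LPAAux.unit_total ℓ s r]
    exact Submodule.sum_mem _ (fun v _ => hvJ v)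
  -- the ideal is closed under left multiplication by degree-zero elements
  have hxJ : x ∈ Submodule.span ℓ S := by
    have hmul : ∀ y (_ : y ∈ Submodule.span ℓ S), x * y ∈ Submodule.span ℓ S := by
      intro y hy
      induction hy using Submodule.span_induction with
      | mem a ha =>
          obtain ⟨a1, ha1, b1, hb1, rfl⟩ := ha
          refine Submodule.subset_span ⟨x * a1, LPAAux.grade0_mul ℓ s r hx ha1, b1, hb1, ?_⟩
          simp only [mul_assoc]
      | zero => rw [mul_zero]; exact Submodule.zero_mem _
      | add a b _ _ hpa hpb => rw [mul_add]; exact Submodule.add_mem _ hpa hpb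
      | smul c a _ hpa => rw [mul_smul_comm]; exact Submodule.smul_mem _ _ hpa
    simpa using hmul 1 h1J
  -- extract the finite representation
  obtain ⟨m, f, g, hsum⟩ := Submodule.mem_span_set'.mp hxJ
  choose a ha b hb hab using fun i : Fin m => (g i).2
  refine ⟨m, fun i => f i • a i, b, fun i => Submodule.smul_mem _ _ (ha i), hb, ?_⟩
  rw [← hsum]
  refine Finset.sum_congr rfl (fun i _ => ?_)
  rw [hab i, smul_mul_assoc, smul_mul_assoc]
end

section
/- Let R be a G-graded algebra and p ∈ R a full homogeneous idempotent of degree 1_G, witnessed by homogeneous elements x₁,…,xₙ ∈ pR and y₁,…,yₙ ∈ Rp with |xᵢ| = −|yᵢ| (written additively) and Σᵢ yᵢ p xᵢ = 1. Define c = Σⱼ ε_{j,1} xⱼ and r = Σⱼ ε_{1,j} yⱼ in Mₙ(R). Then rc = ε_{1,1}·1, c is homogeneous with r homogeneous of opposite degree for the grading on Mₙ(R) induced by the weights dᵢ = |yᵢ|, and the map w ↦ c w r defines a ring homomorphism from ε_{1,1} Mₙ(R) ε_{1,1} to Mₙ(pRp). -/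
/-!
Since each `xₖ` lies in `pR` and `p` is idempotent, `yₖ p xₖ = yₖ xₖ`, so fullness reads
`Σₖ yₖ xₖ = 1`. The column matrix `c` and the row matrix `r` then give `r c = ε₁₁` at once,
and `(c w r)ᵢⱼ = xᵢ w₁₁ yⱼ` for every `w`. Multiplicativity on the corner follows from
`(c w r)(c w' r) = c w (r c) w' r` together with `r c = ε₁₁`, while `xᵢ ∈ pR`, `yⱼ ∈ Rp`
put every entry of `c w r` in `pRp`.
-/

theorem IsIdempotentElem.mul_mul_eq_mul_of_dvd {R : Type*} [Semigroup R] {p x : R}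
    (hp : IsIdempotentElem p) (hx : p ∣ x) (y : R) : y * p * x = y * x := by
  obtain ⟨z, rfl⟩ := hx
  rw [mul_assoc y, ← mul_assoc p, hp.eq]

namespace Matrix

variable {ι R : Type*} [DecidableEq ι]

/-- The matrix `Σᵢ εᵢₐ xᵢ`. -/
def colAt [Zero R] (a : ι) (x : ι → R) : Matrix ι ι R :=
  of fun i j => if j = a then x i else 0

/-- The matrix `Σⱼ εₐⱼ yⱼ`. -/
def rowAt [Zero R] (a : ι) (y : ι → R) : Matrix ι ι R :=
  of fun i j => if i = a then y j else 0

section Grading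

variable {G σ : Type*} [AddCommGroup G] [Zero R] [SetLike σ R] [ZeroMemClass σ R]
  (𝒜 : G → σ) (d : ι → G) (a : ι)

theorem colAt_apply_mem {x : ι → R} (hx : ∀ i, x i ∈ 𝒜 (-(d i))) (i j : ι) :
    colAt a x i j ∈ 𝒜 (-(d a) - d i + d j) := by
  by_cases hj : j = a
  · rw [colAt, of_apply, if_pos hj, hj, show -(d a) - d i + d a = -(d i) by abel]
    exact hx i
  · simp [colAt, hj]

theorem rowAt_apply_mem {y : ι → R} (hy : ∀ j, y j ∈ 𝒜 (d j)) (i j : ι) :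
    rowAt a y i j ∈ 𝒜 (d a - d i + d j) := by
  by_cases hi : i = a
  · rw [rowAt, of_apply, if_pos hi, hi, show d a - d a + d j = d j by abel]
    exact hy j
  · simp [rowAt, hi]

end Grading

variable [Fintype ι]

section NonUnitalNonAssocSemiring

variable [NonUnitalNonAssocSemiring R] (a : ι) (x y : ι → R)

theorem rowAt_mul_colAt : rowAt a y * colAt a x = single a a (∑ k, y k * x k) := by
  ext i j
  by_cases hi : i = a <;> by_cases hj : j = a <;>
    simp [rowAt, colAt, mul_apply, hi, hj, eq_comm (a := a)]

theorem colAt_mul_mul_rowAt_apply (w : Matrix ι ι R) (i j : ι) :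
    (colAt a x * w * rowAt a y) i j = x i * w a a * y j := by
  simp [colAt, rowAt, mul_apply, ite_mul, mul_ite]

omit [DecidableEq ι] in
theorem mul_apply_self_of_row_eq_zero {a : ι} {w : Matrix ι ι R} (hw : ∀ b, b ≠ a → w a b = 0)
    (w' : Matrix ι ι R) : (w * w') a a = w a a * w' a a := by
  rw [mul_apply, Finset.sum_eq_single a (fun b _ hb => by rw [hw b hb, zero_mul])
    (fun h => absurd (Finset.mem_univ a) h)]

end NonUnitalNonAssocSemiring

variable {a : ι} {x y : ι → R}

theorem colAt_mul_mul_rowAt_mul [Semiring R] (hyx : ∑ k, y k * x k = 1) {w : Matrix ι ι R}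
    (hw : ∀ b, b ≠ a → w a b = 0) (w' : Matrix ι ι R) :
    colAt a x * (w * w') * rowAt a y =
      (colAt a x * w * rowAt a y) * (colAt a x * w' * rowAt a y) := by
  have hrc : rowAt a y * colAt a x = single a a 1 := by rw [rowAt_mul_colAt, hyx]
  ext i j
  rw [show colAt a x * w * rowAt a y * (colAt a x * w' * rowAt a y) =
      colAt a x * (w * (single a a 1 * w')) * rowAt a y by
    simp only [← hrc, Matrix.mul_assoc]]
  simp only [colAt_mul_mul_rowAt_apply, mul_apply_self_of_row_eq_zero hw,
    single_mul_apply_same, one_mul]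

theorem exists_colAt_mul_mul_rowAt_apply_eq [NonUnitalSemiring R] {p : R} (hxp : ∀ i, p ∣ x i)
    (hyp : ∀ j, ∃ z, y j = z * p) (w : Matrix ι ι R) (i j : ι) :
    ∃ z, (colAt a x * w * rowAt a y) i j = p * z * p := by
  obtain ⟨z, hz⟩ := hxp i
  obtain ⟨z', hz'⟩ := hyp j
  exact ⟨z * w a a * z', by simp only [colAt_mul_mul_rowAt_apply, hz, hz', mul_assoc]⟩

end Matrix

open Matrix

theorem stmt_19_general {G R : Type*} [AddCommGroup G] [Ring R]
    (𝒜 : G → AddSubgroup R)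
    (p : R) (hpp : p * p = p)
    {n : ℕ} (hn : 0 < n) (x y : Fin n → R) (d : Fin n → G)
    (hx : ∀ i, x i ∈ 𝒜 (-(d i))) (hxp : ∀ i, ∃ z, x i = p * z)
    (hy : ∀ i, y i ∈ 𝒜 (d i)) (hyp : ∀ i, ∃ z, y i = z * p)
    (hfull : ∑ i, y i * p * x i = 1)
    (c r : Matrix (Fin n) (Fin n) R)
    (hc : c = Matrix.of fun i j => if j = (⟨0, hn⟩ : Fin n) then x i else 0)
    (hr : r = Matrix.of fun i j => if i = (⟨0, hn⟩ : Fin n) then y j else 0) :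
    (r * c = Matrix.single (⟨0, hn⟩ : Fin n) (⟨0, hn⟩ : Fin n) 1) ∧
    -- `c` is homogeneous of degree `-d 0` and `r` of degree `d 0`
    (∀ i j, c i j ∈ 𝒜 (-(d (⟨0, hn⟩ : Fin n)) - d i + d j)) ∧
    (∀ i j, r i j ∈ 𝒜 (d (⟨0, hn⟩ : Fin n) - d i + d j)) ∧
    -- `w ↦ c w r` is a ring homomorphism from the corner `ε₁₁ Mₙ(R) ε₁₁` to `Mₙ(pRp)`
    (∀ w w' : Matrix (Fin n) (Fin n) R,
      (∀ i j, (i ≠ (⟨0, hn⟩ : Fin n) ∨ j ≠ (⟨0, hn⟩ : Fin n)) → w i j = 0) →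
      (∀ i j, (i ≠ (⟨0, hn⟩ : Fin n) ∨ j ≠ (⟨0, hn⟩ : Fin n)) → w' i j = 0) →
        c * (w + w') * r = c * w * r + c * w' * r ∧
        c * (w * w') * r = (c * w * r) * (c * w' * r)) ∧
    (∀ w : Matrix (Fin n) (Fin n) R,
      (∀ i j, (i ≠ (⟨0, hn⟩ : Fin n) ∨ j ≠ (⟨0, hn⟩ : Fin n)) → w i j = 0) →
        ∀ i j, ∃ z, (c * w * r) i j = p * z * p) := by
  set a : Fin n := ⟨0, hn⟩
  obtain rfl : c = colAt a x := hc
  obtain rfl : r = rowAt a y := hr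
  have hyx : ∑ k, y k * x k = 1 := by
    simpa only [IsIdempotentElem.mul_mul_eq_mul_of_dvd hpp (hxp _)] using hfull
  refine ⟨by rw [rowAt_mul_colAt, hyx], colAt_apply_mem 𝒜 d a hx,
    rowAt_apply_mem 𝒜 d a hy, fun w w' hw _ => ⟨by rw [Matrix.mul_add, Matrix.add_mul], ?_⟩,
    fun w _ => exists_colAt_mul_mul_rowAt_apply_eq hxp hyp w⟩
  exact colAt_mul_mul_rowAt_mul hyx (fun b hb => hw a b (Or.inr hb)) w'

/-- For a full homogeneous degree-zero idempotent `p` of a `G`-graded ring `R`,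
witnessed by homogeneous `xᵢ ∈ pR`, `yᵢ ∈ Rp` with `|xᵢ| = -|yᵢ| = -dᵢ` and
`Σ yᵢ p xᵢ = 1`, the matrices `c = Σ ε_{j,1} xⱼ` and `r = Σ ε_{1,j} yⱼ` satisfy
`rc = ε_{1,1}`, are homogeneous of opposite degrees for the weighted grading, and
`w ↦ c w r` is a ring homomorphism `ε₁₁Mₙ(R)ε₁₁ → Mₙ(pRp)`. -/
theorem stmt_19 {G R : Type*} [AddCommGroup G] [Ring R]
    (𝒜 : G → AddSubgroup R) [SetLike.GradedMonoid 𝒜]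
    (p : R) (hp : p ∈ 𝒜 0) (hpp : p * p = p)
    {n : ℕ} (hn : 0 < n) (x y : Fin n → R) (d : Fin n → G)
    (hx : ∀ i, x i ∈ 𝒜 (-(d i))) (hxp : ∀ i, ∃ z, x i = p * z)
    (hy : ∀ i, y i ∈ 𝒜 (d i)) (hyp : ∀ i, ∃ z, y i = z * p)
    (hfull : ∑ i, y i * p * x i = 1)
    (c r : Matrix (Fin n) (Fin n) R)
    (hc : c = Matrix.of fun i j => if j = (⟨0, hn⟩ : Fin n) then x i else 0)
    (hr : r = Matrix.of fun i j => if i = (⟨0, hn⟩ : Fin n) then y j else 0) :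
    (r * c = Matrix.single (⟨0, hn⟩ : Fin n) (⟨0, hn⟩ : Fin n) 1) ∧
    -- `c` is homogeneous of degree `-d 0` and `r` of degree `d 0`
    (∀ i j, c i j ∈ 𝒜 (-(d (⟨0, hn⟩ : Fin n)) - d i + d j)) ∧
    (∀ i j, r i j ∈ 𝒜 (d (⟨0, hn⟩ : Fin n) - d i + d j)) ∧
    -- `w ↦ c w r` is a ring homomorphism from the corner `ε₁₁ Mₙ(R) ε₁₁` to `Mₙ(pRp)`
    (∀ w w' : Matrix (Fin n) (Fin n) R,
      (∀ i j, (i ≠ (⟨0, hn⟩ : Fin n) ∨ j ≠ (⟨0, hn⟩ : Fin n)) → w i j = 0) →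
      (∀ i j, (i ≠ (⟨0, hn⟩ : Fin n) ∨ j ≠ (⟨0, hn⟩ : Fin n)) → w' i j = 0) →
        c * (w + w') * r = c * w * r + c * w' * r ∧
        c * (w * w') * r = (c * w * r) * (c * w' * r)) ∧
    (∀ w : Matrix (Fin n) (Fin n) R,
      (∀ i j, (i ≠ (⟨0, hn⟩ : Fin n) ∨ j ≠ (⟨0, hn⟩ : Fin n)) → w i j = 0) →
        ∀ i j, ∃ z, (c * w * r) i j = p * z * p) :=
  stmt_19_general 𝒜 p hpp hn x y d hx hxp hy hyp hfull c r hc hr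
end
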